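/- Let f be a real polynomial of degree n with only real roots, having k distinct roots λ_1,…,λ_k of multiplicities r_1,…,r_k, and let x_{n-1}, x_{n-2} be the roots of f^{(n-1)} and f^{(n-2)} respectively. Then for each j and each m with 0 ≤ m ≤ r_j − 1: |λ_j − x_{n-1}| ≤ sqrt((n − r_j)(n − m − 1)/(r_j − m)) · |x_{n-1} − x_{n-2}|. -/

import Mathlib

/-!
`x_{n-1}` is the mean of the roots `λ_i` of `f`, and comparing the top coefficients of the
quadratic `f^{(n-2)}` with Vieta's formulas gives
`∑ (λ_i - x_{n-1})² = n (n-1) (x_{n-1} - x_{n-2})²`.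
A root of multiplicity `r` contributes `r (λ_j - x_{n-1})²` to this sum, while the other `n - r`
deviations add up to `-r (λ_j - x_{n-1})`, so by Cauchy–Schwarz they contribute at least
`r² (λ_j - x_{n-1})² / (n - r)`. This gives
`r (λ_j - x_{n-1})² ≤ (n - r)(n - 1)(x_{n-1} - x_{n-2})²`, the case `m = 0`;
the bound only grows with `m`.
-/

open Polynomial
open scoped Nat

namespace Multiset

theorem esymm_one {R : Type*} [CommSemiring R] (s : Multiset R) : s.esymm 1 = s.sum := by
  simp [esymm, powersetCard_one]

theorem esymm_cons_succ {R : Type*} [CommSemiring R] (a : R) (s : Multiset R) (k : ℕ) :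
    (a ::ₘ s).esymm (k + 1) = s.esymm (k + 1) + a * s.esymm k := by
  simp [esymm, powersetCard_cons, sum_map_mul_left]

theorem two_mul_esymm_two {R : Type*} [CommRing R] (s : Multiset R) :
    2 * s.esymm 2 = s.sum ^ 2 - (s.map (· ^ 2)).sum := by
  induction s using Multiset.induction with
  | empty => simp [esymm, powersetCard_zero_right]
  | cons a s ih =>
    rw [esymm_cons_succ, esymm_one, sum_cons, map_cons, sum_cons]
    linear_combination ih

theorem sum_map_sub_sq {R : Type*} [CommRing R] (s : Multiset R) (c : R) :
    (s.map fun x => (x - c) ^ 2).sum = (s.map (· ^ 2)).sum - 2 * c * s.sum + card s * c ^ 2 := by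
  induction s using Multiset.induction with
  | empty => simp
  | cons a s ih =>
    simp only [map_cons, sum_cons, card_cons, ih]
    push_cast
    ring

theorem sq_sum_le_card_mul_sum_sq {α : Type*} [Semiring α] [LinearOrder α] [IsStrictOrderedRing α]
    [ExistsAddOfLE α] (s : Multiset α) :
    s.sum ^ 2 ≤ card s * (s.map (· ^ 2)).sum := by
  have h := _root_.sq_sum_le_card_mul_sum_sq (s := s.toEnumFinset) (f := Prod.fst)
  rwa [Finset.sum_eq_multiset_sum, Finset.sum_eq_multiset_sum,
    ← Function.comp_def (· ^ 2) Prod.fst, ← map_map, map_toEnumFinset_fst, card_toEnumFinset] at h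

theorem count_mul_card_mul_sq_sub_le (s : Multiset ℝ) (l c : ℝ) (hc : card s * c = s.sum) :
    count l s * card s * (l - c) ^ 2 ≤
      ((card s : ℝ) - count l s) * (s.map fun x => (x - c) ^ 2).sum := by
  have hs := filter_add_not (· = l) s
  rw [filter_eq'] at hs
  generalize count l s = r at hs ⊢
  generalize s.filter (fun x => ¬x = l) = t at hs
  subst hs
  simp only [card_add, card_replicate, sum_add, sum_replicate, map_add, map_replicate,
    nsmul_eq_mul, Nat.cast_add] at hc ⊢
  have hcs := (t.map (· - c)).sq_sum_le_card_mul_sum_sq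
  rw [sum_map_sub, map_id', map_const', sum_replicate, card_map, map_map, Function.comp_def,
    nsmul_eq_mul] at hcs
  linear_combination hcs + (t.sum - card t * c + r * (c - l)) * hc

end Multiset

namespace Polynomial

theorem eval_iterate_derivative_of_natDegree_le_add_two {R : Type*} [CommSemiring R]
    {f : R[X]} {k : ℕ} (hf : f.natDegree ≤ k + 2) (x : R) :
    (derivative^[k] f).eval x = k ! * (f.coeff k + (k + 1) * f.coeff (k + 1) * x +
      (k + 2).choose 2 * f.coeff (k + 2) * x ^ 2) := by
  have hdeg : (derivative^[k] f).natDegree < 3 :=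
    (natDegree_iterate_derivative f k).trans_lt (by omega)
  rw [eval_eq_sum_range' hdeg]
  simp only [Finset.sum_range_succ, Finset.sum_range_zero, coeff_iterate_derivative,
    Nat.descFactorial_eq_factorial_mul_choose, nsmul_eq_mul, zero_add, Nat.choose_self,
    Nat.choose_symm_of_eq_add (add_comm 1 k), Nat.choose_symm_of_eq_add (add_comm 2 k),
    Nat.choose_one_right]
  push_cast
  ring_nf

section Field

variable {K : Type*} [Field K] [CharZero K] {f : K[X]} {k : ℕ}

theorem mul_eq_sum_roots_of_eval_iterate_derivative_eq_zero
    (hroots : Multiset.card f.roots = f.natDegree) (hdeg : f.natDegree = k + 1) {x : K}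
    (hx : (derivative^[k] f).eval x = 0) : (k + 1) * x = f.roots.sum := by
  have hf : f ≠ 0 := by rintro rfl; simp at hdeg
  have hk : f.coeff k = -(f.leadingCoeff * f.roots.sum) := by
    rw [coeff_eq_esymm_roots_of_card hroots (by omega), hdeg, add_tsub_cancel_left,
      Multiset.esymm_one]
    ring
  rw [eval_iterate_derivative_of_natDegree_le_add_two (by omega), hk,
    coeff_eq_zero_of_natDegree_lt (show f.natDegree < k + 2 by omega), ← hdeg,
    coeff_natDegree] at hx
  have hlin := (mul_eq_zero.1 hx).resolve_left (Nat.cast_ne_zero.2 k.factorial_ne_zero)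
  refine mul_left_cancel₀ (leadingCoeff_ne_zero.2 hf) ?_
  linear_combination hlin

theorem sum_map_roots_sub_sq (hroots : Multiset.card f.roots = f.natDegree)
    (hdeg : f.natDegree = k + 2) {x y : K} (hx : (derivative^[k + 1] f).eval x = 0)
    (hy : (derivative^[k] f).eval y = 0) :
    (f.roots.map fun l => (l - x) ^ 2).sum = (k + 2) * (k + 1) * (x - y) ^ 2 := by
  have hf : f ≠ 0 := by rintro rfl; simp at hdeg
  have hmean := mul_eq_sum_roots_of_eval_iterate_derivative_eq_zero hroots hdeg hx
  have hk : f.coeff k = f.leadingCoeff * f.roots.esymm 2 := by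
    rw [coeff_eq_esymm_roots_of_card hroots (by omega), hdeg, add_tsub_cancel_left]
    ring
  have hk1 : f.coeff (k + 1) = -(f.leadingCoeff * f.roots.sum) := by
    rw [coeff_eq_esymm_roots_of_card hroots (by omega), hdeg, show k + 2 - (k + 1) = 1 by omega,
      Multiset.esymm_one]
    ring
  have hk2 : f.coeff (k + 2) = f.leadingCoeff := by rw [← hdeg]; rfl
  rw [eval_iterate_derivative_of_natDegree_le_add_two hdeg.le, hk, hk1, hk2] at hy
  have hquad := (mul_eq_zero.1 hy).resolve_left (Nat.cast_ne_zero.2 k.factorial_ne_zero)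
  rw [Nat.cast_choose_two] at hquad
  rw [Multiset.sum_map_sub_sq, hroots, hdeg]
  have hnewton := f.roots.two_mul_esymm_two
  push_cast at hquad hmean ⊢
  refine mul_left_cancel₀ (leadingCoeff_ne_zero.2 hf) ?_
  linear_combination f.leadingCoeff * hnewton - 2 * hquad -
    f.leadingCoeff * (f.roots.sum + (k + 2) * x - 2 * (k + 1) * y - 2 * x) * hmean

end Field

theorem rootMultiplicity_mul_sq_sub_le {f : ℝ[X]} {k : ℕ}
    (hroots : Multiset.card f.roots = f.natDegree) (hdeg : f.natDegree = k + 2) {x y : ℝ}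
    (hx : (derivative^[k + 1] f).eval x = 0) (hy : (derivative^[k] f).eval y = 0) (l : ℝ) :
    rootMultiplicity l f * (l - x) ^ 2 ≤
      ((k + 2 : ℝ) - rootMultiplicity l f) * (k + 1) * (x - y) ^ 2 := by
  have hcard : (Multiset.card f.roots : ℝ) = k + 2 := by rw [hroots, hdeg]; push_cast; ring
  have hmean : (Multiset.card f.roots : ℝ) * x = f.roots.sum := by
    rw [hcard, ← mul_eq_sum_roots_of_eval_iterate_derivative_eq_zero hroots hdeg hx]
    push_cast
    ring
  have hdev := f.roots.count_mul_card_mul_sq_sub_le l x hmean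
  rw [count_roots, hcard, sum_map_roots_sub_sq hroots hdeg hx hy] at hdev
  refine le_of_mul_le_mul_left ?_ (by positivity : (0 : ℝ) < k + 2)
  linarith

end Polynomial

theorem sub_mul_sub_one_div_le {n r m : ℕ} (hm : m < r) (hr : r ≤ n) :
    ((n : ℝ) - r) * (n - 1) / r ≤ ((n : ℝ) - r) * (n - m - 1) / (r - m) := by
  have hmr : (m : ℝ) < r := by exact_mod_cast hm
  rw [div_le_div_iff₀ (by linarith [m.cast_nonneg (α := ℝ)]) (by linarith)]
  -- the two sides differ by `(n - r) m (n - r - 1)`, which is `≥ 0` as `n - r` is a natural number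
  rcases hr.eq_or_lt with rfl | hlt
  · simp
  · have hlt : (r : ℝ) + 1 ≤ n := by exact_mod_cast hlt
    have hkey : 0 ≤ ((n : ℝ) - r) * m * (n - r - 1) := by
      apply mul_nonneg (mul_nonneg ?_ m.cast_nonneg) <;> linarith
    linear_combination hkey

theorem stmt_9_general (n m rj : ℕ) (hn : 2 ≤ n) (f : ℝ[X]) (hdeg : f.natDegree = n)
    (hreal : f.roots.card = n) (lj : ℝ)
    (hmult : f.rootMultiplicity lj = rj) (hm : m < rj)
    (xn1 : ℝ) (hxn1 : (derivative^[n - 1] f).eval xn1 = 0)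
    (xn2 : ℝ) (hxn2 : (derivative^[n - 2] f).eval xn2 = 0) :
    |lj - xn1| ≤
      Real.sqrt (((n : ℝ) - rj) * ((n : ℝ) - m - 1) / ((rj : ℝ) - m)) * |xn1 - xn2| := by
  obtain ⟨k, rfl⟩ : ∃ k, n = k + 2 := ⟨n - 2, by omega⟩
  have hbound := rootMultiplicity_mul_sq_sub_le (hreal.trans hdeg.symm) hdeg hxn1 hxn2 lj
  rw [hmult] at hbound
  have hrn : rj ≤ k + 2 := by
    rw [← hmult, ← count_roots, ← hreal]
    exact Multiset.count_le_card _ _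
  have hr : (0 : ℝ) < rj := by exact_mod_cast m.zero_le.trans_lt hm
  have hsq : (lj - xn1) ^ 2 ≤
      (((k + 2 : ℕ) : ℝ) - rj) * ((k + 2 : ℕ) - m - 1) / (rj - m) * (xn1 - xn2) ^ 2 :=
    calc (lj - xn1) ^ 2
        ≤ (((k + 2 : ℕ) : ℝ) - rj) * ((k + 2 : ℕ) - 1) / rj * (xn1 - xn2) ^ 2 := by
          rw [div_mul_eq_mul_div, le_div_iff₀ hr]
          push_cast
          linarith
      _ ≤ _ := mul_le_mul_of_nonneg_right (sub_mul_sub_one_div_le hm hrn) (sq_nonneg _)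
  rw [← Real.sqrt_sq_eq_abs, ← Real.sqrt_sq_eq_abs (xn1 - xn2), ← Real.sqrt_mul' _ (sq_nonneg _)]
  exact Real.sqrt_le_sqrt hsq

theorem stmt_9 (n m rj : ℕ) (hn : 2 ≤ n) (f : ℝ[X]) (hdeg : f.natDegree = n)
    (hreal : f.roots.card = n) (lj : ℝ) (hroot : f.eval lj = 0)
    (hmult : f.rootMultiplicity lj = rj) (hm : m < rj)
    (xn1 : ℝ) (hxn1 : (derivative^[n - 1] f).eval xn1 = 0)
    (xn2 : ℝ) (hxn2 : (derivative^[n - 2] f).eval xn2 = 0) :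
    |lj - xn1| ≤
      Real.sqrt (((n : ℝ) - rj) * ((n : ℝ) - m - 1) / ((rj : ℝ) - m)) * |xn1 - xn2| :=
  stmt_9_general n m rj hn f hdeg hreal lj hmult hm xn1 hxn1 xn2 hxn2
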